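/- Let $\lambda : A \times A \to (M, *)$ be a hermitian form. Then $(\lambda, \mu_\lambda)$ is a quadratic form on $A$ with values in the quadratic group $(M \times_\lambda A, M, h_\lambda, p_\lambda)$: for all $a, a' \in A$ one has $\mu_\lambda(a + a') = \mu_\lambda(a) + \mu_\lambda(a') + p_\lambda(\lambda(a, a'))$ and $h_\lambda(\mu_\lambda(a)) = \lambda(a, a)$. -/

import Mathlib

namespace CST

variable {A M : Type*} [AddCommGroup A] [AddCommGroup M]

/-- The central extension `M ×_lam A` of the paper. -/
def Ext (lam : A →+ A →+ M) : Type _ := M × A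

namespace Ext

variable (lam : A →+ A →+ M)

def mkE (m : M) (a : A) : Ext lam := (m, a)

instance : Add (Ext lam) :=
  ⟨fun x y => (x.1 + y.1 - lam x.2 y.2, x.2 + y.2)⟩

instance : Zero (Ext lam) := ⟨((0 : M), (0 : A))⟩

instance : Neg (Ext lam) :=
  ⟨fun x => (-x.1 - lam x.2 x.2, -x.2)⟩

theorem add_def (x y : Ext lam) :
    x + y = (x.1 + y.1 - lam x.2 y.2, x.2 + y.2) := rfl

theorem zero_def : (0 : Ext lam) = ((0 : M), (0 : A)) := rfl

theorem neg_def (x : Ext lam) : -x = (-x.1 - lam x.2 x.2, -x.2) := rfl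

instance : AddGroup (Ext lam) :=
  AddGroup.ofLeftAxioms
    (by
      intro x y z
      refine Prod.ext ?_ ?_
      · show x.1 + y.1 - lam x.2 y.2 + z.1 - lam (x.2 + y.2) z.2 =
          x.1 + (y.1 + z.1 - lam y.2 z.2) - lam x.2 (y.2 + z.2)
        simp only [map_add, AddMonoidHom.add_apply]
        abel
      · show x.2 + y.2 + z.2 = x.2 + (y.2 + z.2)
        exact add_assoc _ _ _)
    (by
      intro x
      refine Prod.ext ?_ ?_
      · show (0 : M) + x.1 - lam 0 x.2 = x.1
        simp
      · show (0 : A) + x.2 = x.2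
        simp)
    (by
      intro x
      refine Prod.ext ?_ ?_
      · show -x.1 - lam x.2 x.2 + x.1 - lam (-x.2) x.2 = (0 : M)
        simp only [map_neg, AddMonoidHom.neg_apply]
        abel
      · show -x.2 + x.2 = (0 : A)
        simp)

def hfun (star : M →+ M) : Ext lam → M :=
  fun x => x.1 + star x.1 + lam x.2 x.2

def pfun : M → Ext lam := fun m => mkE lam m 0

def mufun : A → Ext lam := fun a => mkE lam 0 a

def relSet (star : M →+ M) : Set (Ext lam) :=
  {x | ∃ (m : M) (a : A), x = mkE lam (star m) (-a) - mkE lam m a}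

theorem mkE_add_mkE (m m' : M) (a a' : A) :
    mkE lam m a + mkE lam m' a' = mkE lam (m + m' - lam a a') (a + a') := rfl

theorem mufun_add (a a' : A) :
    mufun lam (a + a') = mufun lam a + mufun lam a' + pfun lam (lam a a') := by
  simp only [mufun, pfun, mkE_add_mkE, map_zero, add_zero, sub_zero, sub_add_cancel]

theorem hfun_mufun (star : M →+ M) (a : A) : hfun lam star (mufun lam a) = lam a a := by
  simp only [hfun, mufun, mkE, map_zero, zero_add]

end Ext

open Ext

theorem ext_quadratic_form_general (lam : A →+ A →+ M) (star : M →+ M) :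
    (∀ a a' : A,
      mufun lam (a + a') = mufun lam a + mufun lam a' + pfun lam (lam a a')) ∧
    (∀ a : A, hfun lam star (mufun lam a) = lam a a) :=
  ⟨mufun_add lam, hfun_mufun lam star⟩

/-- For a hermitian form `lam`, the pair `(lam, mu_lam)` is a
quadratic form with values in the quadratic group `(M ×_lam A, M, h_lam, p_lam)`. -/
theorem ext_quadratic_form (lam : A →+ A →+ M) (star : M →+ M)
    (star_star : ∀ m : M, star (star m) = m)
    (herm : ∀ a a' : A, lam a' a = star (lam a a')) :
    (∀ a a' : A,
      mufun lam (a + a') = mufun lam a + mufun lam a' + pfun lam (lam a a')) ∧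
    (∀ a : A, hfun lam star (mufun lam a) = lam a a) :=
  ext_quadratic_form_general lam star

end CST
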